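/- Let n ≥ 1 and q ∈ ℂ with q^j ≠ 1 for all 1 ≤ j ≤ n-1. Let V_q be the n×n matrix with entries v_{i,j} = q^{ij} (indices 0 ≤ i,j ≤ n-1). Let L be the lower-triangular n×n matrix with entries l_{i,j} = (q;q)_i / ((q;q)_j (q;q)_{i-j}) for i ≥ j and 0 otherwise, and let D be the diagonal matrix with diagonal entries d_{i,i} = (-1)^i q^{i(i-1)/2} (q;q)_i. Then V_q = L D Lᵀ. -/
import Mathlib
noncomputable def qPoch (z q : ℂ) (n : ℕ) : ℂ := ∏ i ∈ Finset.range n, (1 - z * q ^ i)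
lemma qPoch_zero (z q : ℂ) : qPoch z q 0 = 1 := by simp [qPoch]
lemma qPoch_succ (q : ℂ) (k : ℕ) : qPoch q q (k+1) = qPoch q q k * (1 - q^(k+1)) := by
  simp [qPoch, Finset.prod_range_succ, pow_succ']
noncomputable def bco (q : ℂ) (i k : ℕ) : ℂ :=
  if k ≤ i then qPoch q q i / (qPoch q q k * qPoch q q (i - k)) else 0
noncomputable def cco (q : ℂ) (j k : ℕ) : ℂ :=
  ((-1) ^ k * q ^ (k * (k - 1) / 2) * qPoch q q k) * bco q j k

lemma bco_pascal (q : ℂ) (i m : ℕ) (hp : ∀ m', m' ≤ i+1 → qPoch q q m' ≠ 0)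
    (hk2 : m + 1 ≤ i + 1) :
    bco q (i+1) (m+1) = q^(m+1) * bco q i (m+1) + bco q i m := by
  have hm : m ≤ i := Nat.lt_succ_iff.mp hk2
  rcases eq_or_lt_of_le hm with rfl | hmi
  · have h1 : ¬ (m + 1 ≤ m) := by omega
    simp only [bco, if_pos (le_refl (m+1)), if_neg h1, if_pos (le_refl m),
      Nat.sub_self, qPoch_zero, mul_one, mul_zero, zero_add]
    rw [div_self (by simpa using hp (m+1) le_rfl), div_self (hp m (by omega))]
  · obtain ⟨d, rfl⟩ : ∃ d, i = m + 1 + d := ⟨i - m - 1, by omega⟩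
    have h1 : m + 1 ≤ m + 1 + d := by omega
    have e1 : m + 1 + d + 1 - (m+1) = d + 1 := by omega
    have e3 : m + 1 + d - (m+1) = d := by omega
    have e4 : m + 1 + d - m = d + 1 := by omega
    simp only [bco, if_pos hk2, if_pos h1, if_pos (by omega : m ≤ m + 1 + d), e1, e3, e4]
    rw [show m + 1 + d + 1 = (m + 1 + d) + 1 from rfl, qPoch_succ q (m+1+d),
      qPoch_succ q d, qPoch_succ q m]
    have hpm : qPoch q q m ≠ 0 := hp m (by omega)
    have hpd : qPoch q q d ≠ 0 := hp _ (by omega)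
    have hpi : qPoch q q (m+1+d) ≠ 0 := hp _ (by omega)
    have hf1 : (1 : ℂ) - q^(m+1) ≠ 0 := by
      intro h; exact hp (m+1) (by omega) (by simp [qPoch_succ, h])
    have hf2 : (1 : ℂ) - q^(d+1) ≠ 0 := by
      intro h; exact hp (d+1) (by omega) (by simp [qPoch_succ, h])
    have hpow : q^(m+1) * q^(d+1) = q^(m+1+d+1) := by rw [← pow_add]; congr 1
    field_simp
    ring_nf


lemma tri_succ (k : ℕ) : (k+1) * ((k+1) - 1) / 2 = k * (k-1) / 2 + k := by
  have h : (k+1) * k = k * (k-1) + 2 * k := by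
    cases k with
    | zero => rfl
    | succ s => simp only [Nat.succ_sub_one]; ring
  have he : Even (k * (k-1)) := by
    rcases Nat.even_or_odd k with h2 | h2
    · exact h2.mul_right _
    · exact ((Nat.Odd.sub_odd h2 odd_one)).mul_left _
  obtain ⟨t, ht⟩ := he
  simp only [Nat.add_sub_cancel]
  omega

lemma cco_succ (q : ℂ) (j k : ℕ) (hp : ∀ m, m ≤ j → qPoch q q m ≠ 0) :
    cco q j (k+1) = (q^j - q^k) * cco q j k := by
  rcases lt_or_ge j (k+1) with hjk | hjk
  · rcases lt_or_ge j k with hjk2 | hjk2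
    · simp [cco, bco, Nat.not_le.mpr hjk, Nat.not_le.mpr hjk2]
    · have : j = k := by omega
      subst this
      simp [cco, bco, Nat.not_le.mpr hjk]
  · obtain ⟨d, rfl⟩ : ∃ d, j = k + 1 + d := ⟨j - k - 1, by omega⟩
    have e1 : k + 1 + d - (k+1) = d := by omega
    have e2 : k + 1 + d - k = d + 1 := by omega
    simp only [cco, bco, if_pos (by omega : k+1 ≤ k+1+d), if_pos (by omega : k ≤ k+1+d), e1, e2,
      if_pos hjk]
    rw [tri_succ, pow_add q (k*(k-1)/2) k, qPoch_succ q k, qPoch_succ q d, pow_succ]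
    have hpk : qPoch q q k ≠ 0 := hp k (by omega)
    have hpd : qPoch q q d ≠ 0 := hp d (by omega)
    have hf1 : (1 : ℂ) - q^(k+1) ≠ 0 := by
      intro h; exact hp (k+1) (by omega) (by simp [qPoch_succ, h])
    have hf2 : (1 : ℂ) - q^(d+1) ≠ 0 := by
      intro h; exact hp (d+1) (by omega) (by simp [qPoch_succ, h])
    have hpow : q^k * q^(d+1) = q^(k+1+d) := by rw [← pow_add]; congr 1; omega
    field_simp
    ring_nf

lemma bco_zero' (q : ℂ) (i : ℕ) (h : qPoch q q i ≠ 0) : bco q i 0 = 1 := by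
  simp [bco, qPoch_zero, div_self h]

lemma bco_gt (q : ℂ) (i k : ℕ) (h : i < k) : bco q i k = 0 := by
  simp [bco, Nat.not_le.mpr h]

lemma key (q : ℂ) (j : ℕ) (hpj : ∀ m, m ≤ j → qPoch q q m ≠ 0) (i : ℕ)
    (hpi : ∀ m, m ≤ i → qPoch q q m ≠ 0) :
    ∑ k ∈ Finset.range (i+1), bco q i k * cco q j k = q ^ (i * j) := by
  induction i with
  | zero =>
    simp [cco, bco_zero' q 0 (by simp [qPoch_zero]), bco_zero' q j (hpj j le_rfl), qPoch_zero]
  | succ i ih =>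
    have hpi' : ∀ m, m ≤ i → qPoch q q m ≠ 0 := fun m hm => hpi m (by omega)
    calc ∑ k ∈ Finset.range (i+1+1), bco q (i+1) k * cco q j k
        = ∑ k ∈ Finset.range (i+1), bco q (i+1) (k+1) * cco q j (k+1)
            + bco q (i+1) 0 * cco q j 0 := Finset.sum_range_succ' _ _
      _ = ∑ k ∈ Finset.range (i+1),
            (q^(k+1) * (bco q i (k+1) * cco q j (k+1))
              + (q^j - q^k) * (bco q i k * cco q j k))
            + q^0 * (bco q i 0 * cco q j 0) := by
          congr 1
          · refine Finset.sum_congr rfl fun k hk => ?_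
            rw [bco_pascal q i k hpi (by simp at hk; omega), cco_succ q j k hpj]
            ring
          · rw [bco_zero' q (i+1) (hpi _ le_rfl), bco_zero' q i (hpi i (by omega))]
            ring
      _ = (∑ k ∈ Finset.range (i+1), q^(k+1) * (bco q i (k+1) * cco q j (k+1))
            + q^0 * (bco q i 0 * cco q j 0))
            + ∑ k ∈ Finset.range (i+1), (q^j - q^k) * (bco q i k * cco q j k) := by
          rw [Finset.sum_add_distrib]; ring
      _ = ∑ k ∈ Finset.range (i+1+1), q^k * (bco q i k * cco q j k)
            + ∑ k ∈ Finset.range (i+1), (q^j - q^k) * (bco q i k * cco q j k) := by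
          rw [Finset.sum_range_succ' (fun k => q^k * (bco q i k * cco q j k)) (i+1)]
      _ = ∑ k ∈ Finset.range (i+1), q^k * (bco q i k * cco q j k)
            + ∑ k ∈ Finset.range (i+1), (q^j - q^k) * (bco q i k * cco q j k) := by
          rw [Finset.sum_range_succ]
          simp [bco_gt q i (i+1) (by omega)]
      _ = ∑ k ∈ Finset.range (i+1), q^j * (bco q i k * cco q j k) := by
          rw [← Finset.sum_add_distrib]
          refine Finset.sum_congr rfl fun k hk => by ring
      _ = q^j * ∑ k ∈ Finset.range (i+1), bco q i k * cco q j k := by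
          rw [Finset.mul_sum]
      _ = q ^ ((i+1) * j) := by
          rw [ih hpi', ← pow_add]; congr 1; ring

theorem stmt5 (n : ℕ) (hn : 1 ≤ n) (q : ℂ) (hq : ∀ j : ℕ, 1 ≤ j → j ≤ n - 1 → q ^ j ≠ 1)
    (V L D : Matrix (Fin n) (Fin n) ℂ)
    (hV : ∀ i j, V i j = q ^ ((i : ℕ) * (j : ℕ)))
    (hL : ∀ i j : Fin n, L i j =
      if (j : ℕ) ≤ (i : ℕ) then qPoch q q i / (qPoch q q j * qPoch q q ((i : ℕ) - (j : ℕ))) else 0)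
    (hD : D = Matrix.diagonal fun i : Fin n =>
      (-1) ^ (i : ℕ) * q ^ ((i : ℕ) * ((i : ℕ) - 1) / 2) * qPoch q q i) :
    V = L * D * L.transpose := by
  have hpoch : ∀ m, m ≤ n - 1 → qPoch q q m ≠ 0 := by
    intro m hm
    unfold qPoch
    rw [Finset.prod_ne_zero_iff]
    intro t ht
    simp only [Finset.mem_range] at ht
    intro h
    have hq1 : q ^ (t+1) = 1 := by rw [pow_succ']; linear_combination -h
    exact hq (t+1) (by omega) (by omega) hq1
  ext i j
  rw [hV, hD]
  rw [Matrix.mul_apply]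
  simp only [Matrix.mul_diagonal, Matrix.transpose_apply]
  have hterm : ∀ k : Fin n,
      L i k * ((-1)^(k:ℕ) * q^((k:ℕ)*((k:ℕ)-1)/2) * qPoch q q (k:ℕ)) * L j k
        = bco q (i:ℕ) (k:ℕ) * cco q (j:ℕ) (k:ℕ) := by
    intro k
    rw [hL, hL]
    unfold cco
    unfold bco
    ring
  rw [Finset.sum_congr rfl fun k _ => hterm k, Fin.sum_univ_eq_sum_range
    (fun k => bco q (i:ℕ) k * cco q (j:ℕ) k) n]
  rw [← Finset.sum_subset (Finset.range_subset_range.mpr (show (i:ℕ)+1 ≤ n from i.isLt))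
    (fun k _ hk => by
      rw [bco_gt q (i:ℕ) k (by simp only [Finset.mem_range] at *; omega), zero_mul])]
  exact (key q j (fun m hm => hpoch m (by omega : m ≤ n - 1)) i
    (fun m hm => hpoch m (by have := i.isLt; omega))).symm
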